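/- arXiv:2308.11256 — 2 statements merged into one kernel-verified Lean document; each statement's English description precedes it below -/
import Mathlib

section
/- Let μ > 0 and r = (r₀, r₁) ∈ Δ_m × Δ_n, and let (x*, y*) be a saddle point of the regularized objective f_r on Δ_m × Δ_n. Then (x*, y*) = (r₀, r₁) if and only if (r₀, r₁) is a Nash equilibrium of the original game. -/
open Finset

/-- Squared Euclidean norm of a vector in `ℝ^d`. -/
noncomputable def sqnorm {d : ℕ} (v : Fin d → ℝ) : ℝ := ∑ i, (v i) ^ 2

/-- Euclidean norm `‖·‖₂` of a vector in `ℝ^d`. -/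
noncomputable def enorm2 {d : ℕ} (v : Fin d → ℝ) : ℝ := Real.sqrt (sqnorm v)

/-- Euclidean inner product on `ℝ^d`. -/
noncomputable def ip {d : ℕ} (u v : Fin d → ℝ) : ℝ := ∑ i, u i * v i

/-- The max-player's payoff `⟨x, A y⟩` in the two-player zero-sum game with payoff matrix `A`. -/
noncomputable def pay {m n : ℕ} (A : Matrix (Fin m) (Fin n) ℝ)
    (x : Fin m → ℝ) (y : Fin n → ℝ) : ℝ := ip x (A.mulVec y)

/-- `(x, y)` is a Nash equilibrium of the zero-sum game with payoff matrix `A`: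
`⟨x, A y'⟩ ≤ ⟨x, A y⟩ ≤ ⟨x', A y⟩` for all `x' ∈ Δ_m`, `y' ∈ Δ_n`. -/
def IsNE {m n : ℕ} (A : Matrix (Fin m) (Fin n) ℝ)
    (x : Fin m → ℝ) (y : Fin n → ℝ) : Prop :=
  x ∈ stdSimplex ℝ (Fin m) ∧ y ∈ stdSimplex ℝ (Fin n) ∧
  ∀ x' ∈ stdSimplex ℝ (Fin m), ∀ y' ∈ stdSimplex ℝ (Fin n),
    pay A x y' ≤ pay A x y ∧ pay A x y ≤ pay A x' y

/-- The regularized objective `f_r(x,y) = ⟨x, A y⟩ + (μ/2)‖x − r₀‖₂² − (μ/2)‖y − r₁‖₂²`. -/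
noncomputable def freg {m n : ℕ} (A : Matrix (Fin m) (Fin n) ℝ) (μ : ℝ)
    (r₀ : Fin m → ℝ) (r₁ : Fin n → ℝ) (x : Fin m → ℝ) (y : Fin n → ℝ) : ℝ :=
  pay A x y + (μ / 2) * sqnorm (x - r₀) - (μ / 2) * sqnorm (y - r₁)

/-- `(xs, ys)` is a saddle point of `f_r` on `Δ_m × Δ_n`. -/
def IsSaddle {m n : ℕ} (A : Matrix (Fin m) (Fin n) ℝ) (μ : ℝ)
    (r₀ : Fin m → ℝ) (r₁ : Fin n → ℝ) (xs : Fin m → ℝ) (ys : Fin n → ℝ) : Prop :=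
  xs ∈ stdSimplex ℝ (Fin m) ∧ ys ∈ stdSimplex ℝ (Fin n) ∧
  ∀ x ∈ stdSimplex ℝ (Fin m), ∀ y ∈ stdSimplex ℝ (Fin n),
    freg A μ r₀ r₁ xs y ≤ freg A μ r₀ r₁ xs ys ∧
    freg A μ r₀ r₁ xs ys ≤ freg A μ r₀ r₁ x ys

lemma my_sqnorm_nonneg {d : ℕ} (v : Fin d → ℝ) : 0 ≤ sqnorm v :=
  Finset.sum_nonneg (fun i _ => sq_nonneg _)

lemma my_sqnorm_smul {d : ℕ} (t : ℝ) (v : Fin d → ℝ) :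
    sqnorm (t • v) = t ^ 2 * sqnorm v := by
  simp [sqnorm, Finset.mul_sum, mul_pow]

lemma my_sqnorm_zero {d : ℕ} : sqnorm (0 : Fin d → ℝ) = 0 := by simp [sqnorm]

lemma my_eq_of_sqnorm_sub {d : ℕ} {u v : Fin d → ℝ} (h : sqnorm (u - v) = 0) : u = v := by
  funext i
  have h2 := (Finset.sum_eq_zero_iff_of_nonneg (fun j _ => sq_nonneg ((u - v) j))).1 h i (Finset.mem_univ i)
  have : (u i - v i) = 0 := pow_eq_zero_iff (by norm_num) |>.1 h2
  linarith

lemma my_pay_left {m n : ℕ} (A : Matrix (Fin m) (Fin n) ℝ) (a b : ℝ)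
    (x x' : Fin m → ℝ) (y : Fin n → ℝ) :
    pay A (a • x + b • x') y = a * pay A x y + b * pay A x' y := by
  simp [pay, ip, add_mul, Finset.sum_add_distrib, Finset.mul_sum, mul_assoc]

lemma my_pay_right {m n : ℕ} (A : Matrix (Fin m) (Fin n) ℝ) (a b : ℝ)
    (x : Fin m → ℝ) (y y' : Fin n → ℝ) :
    pay A x (a • y + b • y') = a * pay A x y + b * pay A x y' := by
  simp [pay, ip, Matrix.mulVec_add, Matrix.mulVec_smul, mul_add, Finset.sum_add_distrib,
    Finset.mul_sum, mul_left_comm]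

lemma my_nonpos_of_le_mul (K Δ : ℝ) (hK : 0 ≤ K)
    (h : ∀ t : ℝ, 0 < t → t ≤ 1 → Δ * t ≤ K * t ^ 2) : Δ ≤ 0 := by
  by_contra h'
  push_neg at h'
  set t := min 1 (Δ / (2 * K + 1)) with ht
  have hden : (0:ℝ) < 2 * K + 1 := by linarith
  have htpos : 0 < t := lt_min one_pos (div_pos h' hden)
  have ht1 : t ≤ 1 := min_le_left _ _
  have h2 : t ≤ Δ / (2 * K + 1) := min_le_right _ _
  have hh := h t htpos ht1
  have hΔt : Δ ≤ K * t := by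
    have : Δ * t ≤ (K * t) * t := by nlinarith
    exact le_of_mul_le_mul_right this htpos
  have hkey : Δ / (2 * K + 1) * (2 * K + 1) = Δ := div_mul_cancel₀ _ (ne_of_gt hden)
  nlinarith [mul_le_mul_of_nonneg_left h2 hK]


/-- if `(x*, y*)` is a saddle point of the regularized objective `f_r`, then
`(x*, y*) = (r₀, r₁)` if and only if `(r₀, r₁)` is a Nash equilibrium of the original game. -/
theorem saddle_point_eq_reference_iff_NE
    (m n : ℕ) (hm : 1 ≤ m) (hn : 1 ≤ n) (A : Matrix (Fin m) (Fin n) ℝ)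
    (μ : ℝ) (hμ : 0 < μ)
    (r₀ : Fin m → ℝ) (r₁ : Fin n → ℝ)
    (hr₀ : r₀ ∈ stdSimplex ℝ (Fin m)) (hr₁ : r₁ ∈ stdSimplex ℝ (Fin n))
    (xs : Fin m → ℝ) (ys : Fin n → ℝ) (hsaddle : IsSaddle A μ r₀ r₁ xs ys) :
    (xs = r₀ ∧ ys = r₁) ↔ IsNE A r₀ r₁ := by
  obtain ⟨hxs, hys, hsad⟩ := hsaddle
  constructor
  · rintro ⟨rfl, rfl⟩
    refine ⟨hxs, hys, fun x' hx' y' hy' => ⟨?_, ?_⟩⟩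
    · -- pay A xs y' ≤ pay A xs ys
      have key : pay A xs y' - pay A xs ys ≤ 0 := by
        apply my_nonpos_of_le_mul ((μ/2) * sqnorm (y' - ys)) _
          (mul_nonneg (by linarith) (my_sqnorm_nonneg _))
        intro t ht0 ht1
        set yt := (1 - t) • ys + t • y' with hyt
        have hytmem : yt ∈ stdSimplex ℝ (Fin n) :=
          (convex_stdSimplex ℝ (Fin n)) hys hy' (by linarith) (le_of_lt ht0) (by ring)
        have hle := (hsad xs hxs yt hytmem).1
        have hp : pay A xs yt = (1 - t) * pay A xs ys + t * pay A xs y' := my_pay_right ..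
        have hsub : yt - ys = t • (y' - ys) := by
          funext j; simp [hyt]; ring
        have hsq : sqnorm (yt - ys) = t ^ 2 * sqnorm (y' - ys) := by
          rw [hsub, my_sqnorm_smul]
        have hxx : xs - xs = 0 := by simp
        have hyy : ys - ys = 0 := by simp
        simp only [freg, hp, hsq, hxx, hyy, my_sqnorm_zero] at hle
        nlinarith [hle]
      linarith
    · have key : pay A xs ys - pay A x' ys ≤ 0 := by
        apply my_nonpos_of_le_mul ((μ/2) * sqnorm (x' - xs)) _
          (mul_nonneg (by linarith) (my_sqnorm_nonneg _))
        intro t ht0 ht1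
        set xt := (1 - t) • xs + t • x' with hxt
        have hxtmem : xt ∈ stdSimplex ℝ (Fin m) :=
          (convex_stdSimplex ℝ (Fin m)) hxs hx' (by linarith) (le_of_lt ht0) (by ring)
        have hle := (hsad xt hxtmem ys hys).2
        have hp : pay A xt ys = (1 - t) * pay A xs ys + t * pay A x' ys := my_pay_left ..
        have hsub : xt - xs = t • (x' - xs) := by
          funext j; simp [hxt]; ring
        have hsq : sqnorm (xt - xs) = t ^ 2 * sqnorm (x' - xs) := by
          rw [hsub, my_sqnorm_smul]
        have hxx : xs - xs = 0 := by simp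
        have hyy : ys - ys = 0 := by simp
        simp only [freg, hp, hsq, hxx, hyy, my_sqnorm_zero] at hle
        nlinarith [hle]
      linarith
  · rintro ⟨-, -, hne⟩
    have hNxs : 0 ≤ sqnorm (xs - r₀) := my_sqnorm_nonneg _
    have hNys : 0 ≤ sqnorm (ys - r₁) := my_sqnorm_nonneg _
    have hrr0 : r₀ - r₀ = 0 := by simp
    have hrr1 : r₁ - r₁ = 0 := by simp
    -- chain of inequalities showing all four values equal
    have h1 : freg A μ r₀ r₁ xs r₁ ≤ freg A μ r₀ r₁ xs ys := (hsad r₀ hr₀ r₁ hr₁).1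
    have h2 : freg A μ r₀ r₁ xs ys ≤ freg A μ r₀ r₁ r₀ ys := (hsad r₀ hr₀ r₁ hr₁).2
    have hne1 := (hne xs hxs ys hys).1
    have hne2 := (hne xs hxs ys hys).2
    have h3 : freg A μ r₀ r₁ r₀ ys ≤ freg A μ r₀ r₁ r₀ r₁ := by
      simp only [freg, hrr0, hrr1, my_sqnorm_zero]
      nlinarith
    have h4 : freg A μ r₀ r₁ r₀ r₁ ≤ freg A μ r₀ r₁ xs r₁ := by
      simp only [freg, hrr0, hrr1, my_sqnorm_zero]
      nlinarith
    have e1 : freg A μ r₀ r₁ r₀ ys = freg A μ r₀ r₁ xs ys := by linarith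
    have e2 : freg A μ r₀ r₁ xs r₁ = freg A μ r₀ r₁ xs ys := by linarith
    -- midpoint in x
    have hx0 : xs = r₀ := by
      set z := (1/2 : ℝ) • xs + (1/2 : ℝ) • r₀ with hz
      have hzmem : z ∈ stdSimplex ℝ (Fin m) :=
        (convex_stdSimplex ℝ (Fin m)) hxs hr₀ (by norm_num) (by norm_num) (by norm_num)
      have hle := (hsad z hzmem ys hys).2
      have hp : pay A z ys = (1/2) * pay A xs ys + (1/2) * pay A r₀ ys := my_pay_left ..
      have hsub : z - r₀ = (1/2 : ℝ) • (xs - r₀) := by funext j; simp [hz]; ring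
      have hsq : sqnorm (z - r₀) = (1/2:ℝ) ^ 2 * sqnorm (xs - r₀) := by
        rw [hsub, my_sqnorm_smul]
      have hN : sqnorm (xs - r₀) = 0 := by
        have expand : freg A μ r₀ r₁ z ys
            = (1/2) * freg A μ r₀ r₁ xs ys + (1/2) * freg A μ r₀ r₁ r₀ ys
              - (μ/8) * sqnorm (xs - r₀) := by
          simp only [freg, hp, hsq, hrr0, my_sqnorm_zero]
          ring
        rw [expand, e1] at hle
        nlinarith
      exact my_eq_of_sqnorm_sub hN
    have hy0 : ys = r₁ := by
      set w := (1/2 : ℝ) • ys + (1/2 : ℝ) • r₁ with hw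
      have hwmem : w ∈ stdSimplex ℝ (Fin n) :=
        (convex_stdSimplex ℝ (Fin n)) hys hr₁ (by norm_num) (by norm_num) (by norm_num)
      have hle := (hsad xs hxs w hwmem).1
      have hp : pay A xs w = (1/2) * pay A xs ys + (1/2) * pay A xs r₁ := my_pay_right ..
      have hsub : w - r₁ = (1/2 : ℝ) • (ys - r₁) := by funext j; simp [hw]; ring
      have hsq : sqnorm (w - r₁) = (1/2:ℝ) ^ 2 * sqnorm (ys - r₁) := by
        rw [hsub, my_sqnorm_smul]
      have hN : sqnorm (ys - r₁) = 0 := by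
        have expand : freg A μ r₀ r₁ xs w
            = (1/2) * freg A μ r₀ r₁ xs ys + (1/2) * freg A μ r₀ r₁ xs r₁
              + (μ/8) * sqnorm (ys - r₁) := by
          simp only [freg, hp, hsq, hrr1, my_sqnorm_zero]
          ring
        rw [expand, e2] at hle
        nlinarith
      exact my_eq_of_sqnorm_sub hN
    exact ⟨hx0, hy0⟩
end

section
/- Assume every entry of A lies in [−1, 1], let μ > 0, set P = m + n and C₀ = 2P² + 3μP + P + μ, fix a reference r ∈ Δ_m × Δ_n and let σ* = (x*, y*) be the unique saddle point of f_r. Let 0 < η < 2μ/C₀² and set C₁ = 2ημ − (ηC₀)². Consider the dynamics σ^t_i = θ^t_i/‖θ^t_i‖₁, θ^{t+1}_i = max(θ^t_i + η·m_i(σ^t), 0) (i ∈ {0,1}) with nonnegative nonzero initial blocks, and assume θ^t_i ≠ 0 for all t. Define the potential Φ(θ) = min_{k ≥ 1} ½‖k·σ* − θ‖₂² + η·⟨−m(σ*), θ⟩ for θ ∈ ℝ^{m+n}_{≥0}. Then for every t ≥ 1, Φ(θ^{t+1}) ≤ Φ(θ^t) − C₁·½‖σ* − σ^t‖₂². -/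
open Finset

/-- Regularized loss gradient of the min-player at profile `σ = (x, y)`:
`ℓ₀(σ) = A y + μ(x − r₀)`. -/
noncomputable def ell0 {m n : ℕ} (A : Matrix (Fin m) (Fin n) ℝ) (μ : ℝ)
    (r₀ : Fin m → ℝ) (σ : (Fin m → ℝ) × (Fin n → ℝ)) : Fin m → ℝ :=
  A.mulVec σ.2 + μ • (σ.1 - r₀)

/-- Regularized loss gradient of the max-player at profile `σ = (x, y)`:
`ℓ₁(σ) = −Aᵀ x + μ(y − r₁)`. -/
noncomputable def ell1 {m n : ℕ} (A : Matrix (Fin m) (Fin n) ℝ) (μ : ℝ)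
    (r₁ : Fin n → ℝ) (σ : (Fin m → ℝ) × (Fin n → ℝ)) : Fin n → ℝ :=
  -(A.transpose.mulVec σ.1) + μ • (σ.2 - r₁)

/-- `m₀(σ) = ⟨ℓ₀(σ), x⟩·𝟙 − ℓ₀(σ)`. -/
noncomputable def mvec0 {m n : ℕ} (A : Matrix (Fin m) (Fin n) ℝ) (μ : ℝ)
    (r₀ : Fin m → ℝ) (σ : (Fin m → ℝ) × (Fin n → ℝ)) : Fin m → ℝ :=
  (ip (ell0 A μ r₀ σ) σ.1) • (1 : Fin m → ℝ) - ell0 A μ r₀ σ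

/-- `m₁(σ) = ⟨ℓ₁(σ), y⟩·𝟙 − ℓ₁(σ)`. -/
noncomputable def mvec1 {m n : ℕ} (A : Matrix (Fin m) (Fin n) ℝ) (μ : ℝ)
    (r₁ : Fin n → ℝ) (σ : (Fin m → ℝ) × (Fin n → ℝ)) : Fin n → ℝ :=
  (ip (ell1 A μ r₁ σ) σ.2) • (1 : Fin n → ℝ) - ell1 A μ r₁ σ

/-- The strategy profile obtained by `ℓ₁`-normalizing each block of
the regret vector `θ`: `σ_i = θ_i / ‖θ_i‖₁`. -/
noncomputable def strat {m n : ℕ} (θ : (Fin m → ℝ) × (Fin n → ℝ)) :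
    (Fin m → ℝ) × (Fin n → ℝ) :=
  ((∑ i, |θ.1 i|)⁻¹ • θ.1, (∑ j, |θ.2 j|)⁻¹ • θ.2)

/-- The RM+ Lyapunov potential
`Φ(θ) = min_{k ≥ 1} ½‖k·σ* − θ‖₂² + η⟨−m(σ*), θ⟩` (the minimum is attained, so it equals
the infimum used here). -/
noncomputable def Phi {m n : ℕ} (A : Matrix (Fin m) (Fin n) ℝ) (μ : ℝ)
    (r₀ : Fin m → ℝ) (r₁ : Fin n → ℝ) (η : ℝ)
    (xs : Fin m → ℝ) (ys : Fin n → ℝ) (θ : (Fin m → ℝ) × (Fin n → ℝ)) : ℝ :=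
  sInf {v : ℝ | ∃ k : ℝ, 1 ≤ k ∧
      v = (1 / 2) * (sqnorm (k • xs - θ.1) + sqnorm (k • ys - θ.2))} +
    η * (ip (-(mvec0 A μ r₀ (xs, ys))) θ.1 + ip (-(mvec1 A μ r₁ (xs, ys))) θ.2)

/-!
For fixed `k ≥ 1` the point `ξ = k • σ*` lies in the nonnegative orthant, and the positive part is
the projection onto it, so `‖ξ - θ⁺‖² + ‖θ⁺ - w‖² ≤ ‖ξ - w‖²` for `w = θ + η m(σ)`. Since `m(σ)` is
orthogonal to `θ`, expanding the squares trades a gain `η k ⟨m(σ), σ*⟩` against a cost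
`η²/2 ‖m(σ) - m(σ*)‖²` (the linear term `η⟨-m(σ*), θ⁺ - w⟩` is absorbed by the projection slack).
The first-order conditions at the saddle point and the `μ`-strong monotonicity of the regularized
gradient give `⟨m(σ), σ*⟩ ≥ μ‖σ - σ*‖²`, and `m` is `C₀`-Lipschitz on `Δ_m × Δ_n`. Hence each
`k`-term drops by `C₁ · ½‖σ* - σ‖²`, and so does their infimum.
-/
open Filter Topology
open scoped Matrix

section Euclidean

variable {d : ℕ}

lemma ip_eq_dotProduct (u v : Fin d → ℝ) : ip u v = u ⬝ᵥ v := rfl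

lemma ip_smul_right (u v : Fin d → ℝ) (c : ℝ) : ip u (c • v) = c * ip u v :=
  dotProduct_smul c u v

lemma sqnorm_eq_dotProduct (v : Fin d → ℝ) : sqnorm v = v ⬝ᵥ v := by
  simp [sqnorm, dotProduct, sq]

lemma sqnorm_smul (c : ℝ) (v : Fin d → ℝ) : sqnorm (c • v) = c ^ 2 * sqnorm v := by
  simp [sqnorm, mul_pow, mul_sum]

lemma ip_eq_inner (u v : Fin d → ℝ) :
    ip u v = inner ℝ (WithLp.toLp 2 u : EuclideanSpace ℝ (Fin d)) (WithLp.toLp 2 v) := by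
  simp [ip, PiLp.inner_apply, mul_comm]

lemma enorm2_eq_norm (v : Fin d → ℝ) :
    enorm2 v = ‖(WithLp.toLp 2 v : EuclideanSpace ℝ (Fin d))‖ := by
  simp [enorm2, sqnorm, EuclideanSpace.norm_eq]

lemma enorm2_nonneg (v : Fin d → ℝ) : 0 ≤ enorm2 v := Real.sqrt_nonneg _

lemma sqnorm_nonneg (v : Fin d → ℝ) : 0 ≤ sqnorm v := sum_nonneg fun _ _ => sq_nonneg _

lemma sq_enorm2 (v : Fin d → ℝ) : enorm2 v ^ 2 = sqnorm v := Real.sq_sqrt (sqnorm_nonneg v)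

lemma enorm2_add_le (u v : Fin d → ℝ) : enorm2 (u + v) ≤ enorm2 u + enorm2 v := by
  simpa [enorm2_eq_norm] using norm_add_le (WithLp.toLp 2 u : EuclideanSpace ℝ (Fin d)) _

lemma enorm2_sub_le (u v : Fin d → ℝ) : enorm2 (u - v) ≤ enorm2 u + enorm2 v := by
  simpa [enorm2_eq_norm] using norm_sub_le (WithLp.toLp 2 u : EuclideanSpace ℝ (Fin d)) _

lemma enorm2_smul (c : ℝ) (v : Fin d → ℝ) : enorm2 (c • v) = |c| * enorm2 v := by
  simpa [enorm2_eq_norm] using norm_smul c (WithLp.toLp 2 v : EuclideanSpace ℝ (Fin d))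

lemma enorm2_one : enorm2 (1 : Fin d → ℝ) = √d := by
  simp [enorm2, sqnorm]

lemma abs_ip_le (u v : Fin d → ℝ) : |ip u v| ≤ enorm2 u * enorm2 v := by
  simpa [ip_eq_inner, enorm2_eq_norm] using
    abs_real_inner_le_norm (WithLp.toLp 2 u : EuclideanSpace ℝ (Fin d)) (WithLp.toLp 2 v)

lemma sqnorm_sub_comm (u v : Fin d → ℝ) : sqnorm (u - v) = sqnorm (v - u) := by
  unfold sqnorm
  exact sum_congr rfl fun i _ => by simp only [Pi.sub_apply]; ring

lemma sqnorm_le_one_of_mem_stdSimplex {x : Fin d → ℝ} (hx : x ∈ stdSimplex ℝ (Fin d)) :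
    sqnorm x ≤ 1 :=
  calc sqnorm x ≤ ∑ i, x i := sum_le_sum fun i _ => by
        obtain ⟨h0, h1⟩ := mem_Icc_of_mem_stdSimplex hx i
        nlinarith
    _ = 1 := hx.2

lemma enorm2_le_one_of_mem_stdSimplex {x : Fin d → ℝ} (hx : x ∈ stdSimplex ℝ (Fin d)) :
    enorm2 x ≤ 1 :=
  Real.sqrt_le_one.mpr (sqnorm_le_one_of_mem_stdSimplex hx)

lemma enorm2_sub_le_sqrt_two_of_mem_stdSimplex {x r : Fin d → ℝ}
    (hx : x ∈ stdSimplex ℝ (Fin d)) (hr : r ∈ stdSimplex ℝ (Fin d)) :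
    enorm2 (x - r) ≤ √2 := by
  refine Real.sqrt_le_sqrt ?_
  calc sqnorm (x - r) ≤ sqnorm x + sqnorm r := by
        simp only [sqnorm, Pi.sub_apply, ← sum_add_distrib]
        exact sum_le_sum fun i _ => by nlinarith [mul_nonneg (hx.1 i) (hr.1 i)]
    _ ≤ 2 := by linarith [sqnorm_le_one_of_mem_stdSimplex hx, sqnorm_le_one_of_mem_stdSimplex hr]

lemma enorm2_mulVec_le {m n : ℕ} {A : Matrix (Fin m) (Fin n) ℝ}
    (hA : ∀ i j, A i j ∈ Set.Icc (-1 : ℝ) 1) (v : Fin n → ℝ) :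
    enorm2 (A *ᵥ v) ≤ √(m * n) * enorm2 v := by
  have hrow : ∀ i, (A *ᵥ v) i ^ 2 ≤ n * sqnorm v := fun i =>
    calc (A *ᵥ v) i ^ 2 ≤ (∑ j, A i j ^ 2) * sqnorm v := sum_mul_sq_le_sq_mul_sq univ (A i) v
      _ ≤ n * sqnorm v := by
        gcongr
        · exact sum_nonneg fun j _ => sq_nonneg _
        · simpa using sum_le_sum fun j (_ : j ∈ univ) =>
            (sq_le_one_iff_abs_le_one _).2 (abs_le.2 (hA i j))
  have hsq : sqnorm (A *ᵥ v) ≤ m * n * sqnorm v :=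
    calc sqnorm (A *ᵥ v) ≤ ∑ _i : Fin m, n * sqnorm v := sum_le_sum fun i _ => hrow i
      _ = m * n * sqnorm v := by simp [mul_assoc]
  rw [enorm2, enorm2, ← Real.sqrt_mul (by positivity)]
  exact Real.sqrt_le_sqrt hsq

end Euclidean

section Regret

variable {d : ℕ}

/-- `mvec0 A μ r₀ σ` and `mvec1 A μ r₁ σ` are definitionally `regretVec` of the player's loss
at `σ` and the player's strategy. -/
noncomputable def regretVec (ℓ x : Fin d → ℝ) : Fin d → ℝ := ip ℓ x • (1 : Fin d → ℝ) - ℓ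

lemma ip_regretVec (ℓ x z : Fin d → ℝ) :
    ip (regretVec ℓ x) z = ip ℓ x * ∑ i, z i - ip ℓ z := by
  simp [regretVec, ip_eq_dotProduct, sub_dotProduct, one_dotProduct]

lemma ip_regretVec_of_sum_eq_one (ℓ x : Fin d → ℝ) {z : Fin d → ℝ} (hz : ∑ i, z i = 1) :
    ip (regretVec ℓ x) z = ip ℓ (x - z) := by
  rw [ip_regretVec, hz, mul_one, ip_eq_dotProduct, ip_eq_dotProduct, ip_eq_dotProduct,
    dotProduct_sub]

lemma sum_abs_pos_of_ne_zero {w : Fin d → ℝ} (hw0 : w ≠ 0) : 0 < ∑ i, |w i| := by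
  obtain ⟨i, hi⟩ := Function.ne_iff.1 hw0
  exact lt_of_lt_of_le (abs_pos.2 hi) (single_le_sum (fun j _ => abs_nonneg (w j)) (mem_univ i))

lemma inv_sum_abs_smul_mem_stdSimplex {w : Fin d → ℝ} (hw : ∀ i, 0 ≤ w i) (hw0 : w ≠ 0) :
    (∑ i, |w i|)⁻¹ • w ∈ stdSimplex ℝ (Fin d) := by
  have hpos := sum_abs_pos_of_ne_zero hw0
  refine ⟨fun i => mul_nonneg (inv_nonneg.2 hpos.le) (hw i), ?_⟩
  have hsum : ∑ i, w i = ∑ i, |w i| := sum_congr rfl fun i _ => (abs_of_nonneg (hw i)).symm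
  simp [← mul_sum, hsum, hpos.ne']

lemma ip_regretVec_inv_sum_abs_smul {w : Fin d → ℝ} (ℓ : Fin d → ℝ) (hw : ∀ i, 0 ≤ w i)
    (hw0 : w ≠ 0) : ip (regretVec ℓ ((∑ i, |w i|)⁻¹ • w)) w = 0 := by
  set c := ∑ i, |w i|
  have hx := inv_sum_abs_smul_mem_stdSimplex hw hw0
  calc ip (regretVec ℓ (c⁻¹ • w)) w = c * ip (regretVec ℓ (c⁻¹ • w)) (c⁻¹ • w) := by
        rw [← ip_smul_right, smul_inv_smul₀ (sum_abs_pos_of_ne_zero hw0).ne']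
    _ = 0 := by
        rw [ip_regretVec_of_sum_eq_one _ _ hx.2, sub_self, ip_eq_dotProduct, dotProduct_zero,
          mul_zero]

lemma enorm2_regretVec_sub_le (ℓ ℓ' : Fin d → ℝ) {x : Fin d → ℝ} (x' : Fin d → ℝ)
    (hx : enorm2 x ≤ 1) :
    enorm2 (regretVec ℓ x - regretVec ℓ' x') ≤
      (√d + 1) * enorm2 (ℓ - ℓ') + √d * enorm2 ℓ' * enorm2 (x - x') := by
  set c := ip (ℓ - ℓ') x + ip ℓ' (x - x')
  have hdiff : regretVec ℓ x - regretVec ℓ' x' = c • (1 : Fin d → ℝ) - (ℓ - ℓ') := by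
    ext i
    simp only [regretVec, c, ip_eq_dotProduct, sub_dotProduct, dotProduct_sub, Pi.sub_apply,
      Pi.smul_apply, smul_eq_mul]
    ring
  have hc : |c| ≤ enorm2 (ℓ - ℓ') + enorm2 ℓ' * enorm2 (x - x') :=
    calc |c| ≤ |ip (ℓ - ℓ') x| + |ip ℓ' (x - x')| := abs_add_le _ _
      _ ≤ enorm2 (ℓ - ℓ') * enorm2 x + enorm2 ℓ' * enorm2 (x - x') :=
        add_le_add (abs_ip_le _ _) (abs_ip_le _ _)
      _ ≤ enorm2 (ℓ - ℓ') + enorm2 ℓ' * enorm2 (x - x') := by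
        gcongr
        exact mul_le_of_le_one_right (enorm2_nonneg _) hx
  rw [hdiff]
  calc enorm2 (c • (1 : Fin d → ℝ) - (ℓ - ℓ'))
      ≤ |c| * √d + enorm2 (ℓ - ℓ') := by
        simpa only [enorm2_smul, enorm2_one] using enorm2_sub_le (c • (1 : Fin d → ℝ)) (ℓ - ℓ')
    _ ≤ (enorm2 (ℓ - ℓ') + enorm2 ℓ' * enorm2 (x - x')) * √d + enorm2 (ℓ - ℓ') := by gcongr
    _ = _ := by ring

end Regret

lemma nonneg_of_forall_mul_add_sq_mul_nonneg {c q : ℝ}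
    (h : ∀ l : ℝ, 0 < l → l ≤ 1 → 0 ≤ l * c + l ^ 2 * q) : 0 ≤ c := by
  have hlim : Tendsto (fun l : ℝ => c + l * q) (𝓝[>] 0) (𝓝 c) := by
    have hcont : Continuous fun l : ℝ => c + l * q := by fun_prop
    simpa using (hcont.tendsto 0).mono_left nhdsWithin_le_nhds
  refine ge_of_tendsto hlim ?_
  filter_upwards [Ioc_mem_nhdsGT one_pos] with l ⟨hl0, hl1⟩
  have := h l hl0 hl1
  nlinarith

section Game

variable {m n : ℕ} (A : Matrix (Fin m) (Fin n) ℝ) (μ : ℝ) (r₀ : Fin m → ℝ) (r₁ : Fin n → ℝ)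

lemma ell1_eq_ell0_neg_transpose (σ : (Fin m → ℝ) × (Fin n → ℝ)) :
    ell1 A μ r₁ σ = ell0 (-Aᵀ) μ r₁ σ.swap := by
  simp [ell1, ell0, Matrix.neg_mulVec]

lemma mvec1_eq_mvec0_neg_transpose (σ : (Fin m → ℝ) × (Fin n → ℝ)) :
    mvec1 A μ r₁ σ = mvec0 (-Aᵀ) μ r₁ σ.swap := by
  simp only [mvec1, mvec0, ell1_eq_ell0_neg_transpose, Prod.fst_swap]

lemma freg_neg_transpose (x : Fin m → ℝ) (y : Fin n → ℝ) :
    freg (-Aᵀ) μ r₁ r₀ y x = -freg A μ r₀ r₁ x y := by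
  simp only [freg, pay, ip_eq_dotProduct, Matrix.neg_mulVec, neg_dotProduct,
    Matrix.mulVec_transpose, Matrix.dotProduct_mulVec, dotProduct_comm y]
  ring

lemma ell0_sub_ell0 (x xs : Fin m → ℝ) (y ys : Fin n → ℝ) :
    ell0 A μ r₀ (x, y) - ell0 A μ r₀ (xs, ys) = A *ᵥ (y - ys) + μ • (x - xs) := by
  simp only [ell0, Matrix.mulVec_sub, smul_sub]
  abel

lemma ip_ell0_sub_ell0_add_ip_ell1_sub_ell1 (x xs : Fin m → ℝ) (y ys : Fin n → ℝ) :
    ip (ell0 A μ r₀ (x, y) - ell0 A μ r₀ (xs, ys)) (x - xs) +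
      ip (ell1 A μ r₁ (x, y) - ell1 A μ r₁ (xs, ys)) (y - ys) =
      μ * (sqnorm (x - xs) + sqnorm (y - ys)) := by
  rw [ell1_eq_ell0_neg_transpose, ell1_eq_ell0_neg_transpose, Prod.swap_prod_mk,
    Prod.swap_prod_mk, ell0_sub_ell0, ell0_sub_ell0]
  simp only [ip_eq_dotProduct, sqnorm_eq_dotProduct, add_dotProduct, smul_dotProduct,
    smul_eq_mul, Matrix.neg_mulVec, neg_dotProduct, Matrix.mulVec_transpose,
    dotProduct_comm (A *ᵥ (y - ys)), Matrix.dotProduct_mulVec]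
  ring

variable {A μ r₀ r₁}

lemma IsSaddle.neg_transpose {xs : Fin m → ℝ} {ys : Fin n → ℝ}
    (hs : IsSaddle A μ r₀ r₁ xs ys) : IsSaddle (-Aᵀ) μ r₁ r₀ ys xs := by
  refine ⟨hs.2.1, hs.1, fun y hy x hx => ?_⟩
  simp only [freg_neg_transpose, neg_le_neg_iff]
  exact ⟨(hs.2.2 x hx ys hs.2.1).2, (hs.2.2 xs hs.1 y hy).1⟩

lemma freg_sub_freg_left (x xs : Fin m → ℝ) (ys : Fin n → ℝ) :
    freg A μ r₀ r₁ x ys - freg A μ r₀ r₁ xs ys =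
      ip (ell0 A μ r₀ (xs, ys)) (x - xs) + μ / 2 * sqnorm (x - xs) := by
  have hcancel : freg A μ r₀ r₁ x ys - freg A μ r₀ r₁ xs ys =
      ip x (A *ᵥ ys) - ip xs (A *ᵥ ys) + μ / 2 * (sqnorm (x - r₀) - sqnorm (xs - r₀)) := by
    simp only [freg, pay]
    ring
  rw [hcancel]
  simp only [ell0, sqnorm, ip, Pi.add_apply, Pi.sub_apply, Pi.smul_apply, smul_eq_mul,
    ← sum_sub_distrib, mul_sum, ← sum_add_distrib]
  exact sum_congr rfl fun i _ => by ring

lemma IsSaddle.ip_ell0_sub_nonneg {xs : Fin m → ℝ} {ys : Fin n → ℝ}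
    (hs : IsSaddle A μ r₀ r₁ xs ys) {x : Fin m → ℝ} (hx : x ∈ stdSimplex ℝ (Fin m)) :
    0 ≤ ip (ell0 A μ r₀ (xs, ys)) (x - xs) := by
  refine nonneg_of_forall_mul_add_sq_mul_nonneg (q := μ / 2 * sqnorm (x - xs)) fun l hl0 hl1 => ?_
  have hmem := (convex_stdSimplex ℝ (Fin m)).add_smul_sub_mem hs.1 hx ⟨hl0.le, hl1⟩
  have hmin := sub_nonneg.2 (hs.2.2 _ hmem ys hs.2.1).2
  rw [freg_sub_freg_left, add_sub_cancel_left, ip_eq_dotProduct, dotProduct_smul,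
    sqnorm_smul, smul_eq_mul, ← ip_eq_dotProduct] at hmin
  linarith

lemma IsSaddle.ip_ell1_sub_nonneg {xs : Fin m → ℝ} {ys : Fin n → ℝ}
    (hs : IsSaddle A μ r₀ r₁ xs ys) {y : Fin n → ℝ} (hy : y ∈ stdSimplex ℝ (Fin n)) :
    0 ≤ ip (ell1 A μ r₁ (xs, ys)) (y - ys) := by
  rw [ell1_eq_ell0_neg_transpose, Prod.swap_prod_mk]
  exact hs.neg_transpose.ip_ell0_sub_nonneg hy

lemma IsSaddle.mul_sqnorm_sub_le_ip_mvec {xs : Fin m → ℝ} {ys : Fin n → ℝ}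
    (hs : IsSaddle A μ r₀ r₁ xs ys) {x : Fin m → ℝ} {y : Fin n → ℝ}
    (hx : x ∈ stdSimplex ℝ (Fin m)) (hy : y ∈ stdSimplex ℝ (Fin n)) :
    μ * (sqnorm (x - xs) + sqnorm (y - ys)) ≤
      ip (mvec0 A μ r₀ (x, y)) xs + ip (mvec1 A μ r₁ (x, y)) ys := by
  have h₀ : ip (mvec0 A μ r₀ (x, y)) xs = ip (ell0 A μ r₀ (x, y)) (x - xs) :=
    ip_regretVec_of_sum_eq_one _ _ hs.1.2
  have h₁ : ip (mvec1 A μ r₁ (x, y)) ys = ip (ell1 A μ r₁ (x, y)) (y - ys) :=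
    ip_regretVec_of_sum_eq_one _ _ hs.2.1.2
  have hmono := ip_ell0_sub_ell0_add_ip_ell1_sub_ell1 A μ r₀ r₁ x xs y ys
  have hvi₀ := hs.ip_ell0_sub_nonneg hx
  have hvi₁ := hs.ip_ell1_sub_nonneg hy
  simp only [ip_eq_dotProduct, sub_dotProduct] at h₀ h₁ hmono hvi₀ hvi₁ ⊢
  linarith

end Game

section Lipschitz

variable {m n : ℕ} {A : Matrix (Fin m) (Fin n) ℝ} {μ : ℝ} {r₀ : Fin m → ℝ} {r₁ : Fin n → ℝ}

lemma enorm2_ell0_sub_ell0_le (hA : ∀ i j, A i j ∈ Set.Icc (-1 : ℝ) 1) (hμ : 0 ≤ μ)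
    (x xs : Fin m → ℝ) (y ys : Fin n → ℝ) :
    enorm2 (ell0 A μ r₀ (x, y) - ell0 A μ r₀ (xs, ys)) ≤
      √(m * n) * enorm2 (y - ys) + μ * enorm2 (x - xs) := by
  rw [ell0_sub_ell0]
  calc _ ≤ enorm2 (A *ᵥ (y - ys)) + enorm2 (μ • (x - xs)) := enorm2_add_le _ _
    _ ≤ _ := by
      rw [enorm2_smul, abs_of_nonneg hμ]
      gcongr
      exact enorm2_mulVec_le hA _

lemma enorm2_ell0_le (hA : ∀ i j, A i j ∈ Set.Icc (-1 : ℝ) 1) (hμ : 0 ≤ μ)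
    (hr₀ : r₀ ∈ stdSimplex ℝ (Fin m)) {x : Fin m → ℝ} {y : Fin n → ℝ}
    (hx : x ∈ stdSimplex ℝ (Fin m)) (hy : y ∈ stdSimplex ℝ (Fin n)) :
    enorm2 (ell0 A μ r₀ (x, y)) ≤ √(m * n) + √2 * μ := by
  calc enorm2 (ell0 A μ r₀ (x, y)) ≤ enorm2 (A *ᵥ y) + enorm2 (μ • (x - r₀)) :=
        enorm2_add_le _ _
    _ = enorm2 (A *ᵥ y) + μ * enorm2 (x - r₀) := by rw [enorm2_smul, abs_of_nonneg hμ]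
    _ ≤ √(m * n) * 1 + μ * √2 := by
      gcongr
      · exact (enorm2_mulVec_le hA y).trans (by gcongr; exact enorm2_le_one_of_mem_stdSimplex hy)
      · exact enorm2_sub_le_sqrt_two_of_mem_stdSimplex hx hr₀
    _ = √(m * n) + √2 * μ := by ring

lemma enorm2_mvec0_sub_mvec0_le (hA : ∀ i j, A i j ∈ Set.Icc (-1 : ℝ) 1) (hμ : 0 ≤ μ)
    (hr₀ : r₀ ∈ stdSimplex ℝ (Fin m)) {x xs : Fin m → ℝ} {y ys : Fin n → ℝ}
    (hx : x ∈ stdSimplex ℝ (Fin m)) (hxs : xs ∈ stdSimplex ℝ (Fin m))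
    (hys : ys ∈ stdSimplex ℝ (Fin n)) :
    enorm2 (mvec0 A μ r₀ (x, y) - mvec0 A μ r₀ (xs, ys)) ≤
      (√m + 1) * (√(m * n) * enorm2 (y - ys) + μ * enorm2 (x - xs)) +
        √m * (√(m * n) + √2 * μ) * enorm2 (x - xs) := by
  calc _ ≤ (√m + 1) * enorm2 (ell0 A μ r₀ (x, y) - ell0 A μ r₀ (xs, ys)) +
          √m * enorm2 (ell0 A μ r₀ (xs, ys)) * enorm2 (x - xs) :=
        enorm2_regretVec_sub_le _ _ _ (enorm2_le_one_of_mem_stdSimplex hx)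
    _ ≤ _ := by
      have hΔℓ := enorm2_ell0_sub_ell0_le (r₀ := r₀) hA hμ x xs y ys
      have hℓ := enorm2_ell0_le hA hμ hr₀ hxs hys
      have := enorm2_nonneg (x - xs)
      gcongr

lemma mvec_lipschitz_const_le (hm : 1 ≤ m) (hn : 1 ≤ n) (hμ : 0 ≤ μ) {P : ℝ} (hP : P = m + n) :
    (√m + √n + 2) * (√(m * n) + μ) + (√m + √n) * (√(m * n) + √2 * μ) ≤
      2 * P ^ 2 + 3 * μ * P + P + μ := by
  have hm' : (1 : ℝ) ≤ m := by exact_mod_cast hm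
  have hn' : (1 : ℝ) ≤ n := by exact_mod_cast hn
  have hsqrt_m : √m ≤ m := Real.sqrt_le_iff.2 ⟨by positivity, by nlinarith⟩
  have hsqrt_n : √n ≤ n := Real.sqrt_le_iff.2 ⟨by positivity, by nlinarith⟩
  have hP2 : 2 ≤ P := by linarith
  have hsqrt_mn : √(m * n) ≤ P / 2 :=
    Real.sqrt_le_iff.2 ⟨by linarith, by nlinarith [sq_nonneg ((m : ℝ) - n)]⟩
  have hsqrt_two : √2 ≤ 3 / 2 := Real.sqrt_le_iff.2 ⟨by norm_num, by norm_num⟩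
  calc (√m + √n + 2) * (√(m * n) + μ) + (√m + √n) * (√(m * n) + √2 * μ)
      ≤ (P + 2) * (P / 2 + μ) + P * (P / 2 + 3 / 2 * μ) := by
        have hsum : √m + √n ≤ P := by linarith
        have hP0 : 0 ≤ P := by linarith
        gcongr
    _ ≤ 2 * P ^ 2 + 3 * μ * P + P + μ := by nlinarith

lemma sqnorm_mvec_sub_mvec_le (hm : 1 ≤ m) (hn : 1 ≤ n)
    (hA : ∀ i j, A i j ∈ Set.Icc (-1 : ℝ) 1) (hμ : 0 ≤ μ)
    (hr₀ : r₀ ∈ stdSimplex ℝ (Fin m)) (hr₁ : r₁ ∈ stdSimplex ℝ (Fin n))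
    {x xs : Fin m → ℝ} {y ys : Fin n → ℝ}
    (hx : x ∈ stdSimplex ℝ (Fin m)) (hxs : xs ∈ stdSimplex ℝ (Fin m))
    (hy : y ∈ stdSimplex ℝ (Fin n)) (hys : ys ∈ stdSimplex ℝ (Fin n))
    {P : ℝ} (hP : P = m + n) :
    sqnorm (mvec0 A μ r₀ (x, y) - mvec0 A μ r₀ (xs, ys)) +
        sqnorm (mvec1 A μ r₁ (x, y) - mvec1 A μ r₁ (xs, ys)) ≤
      (2 * P ^ 2 + 3 * μ * P + P + μ) ^ 2 * (sqnorm (x - xs) + sqnorm (y - ys)) := by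
  set a := enorm2 (x - xs)
  set b := enorm2 (y - ys)
  set D := √(sqnorm (x - xs) + sqnorm (y - ys))
  have ha : a ≤ D := Real.sqrt_le_sqrt (by linarith [sqnorm_nonneg (y - ys)])
  have hb : b ≤ D := Real.sqrt_le_sqrt (by linarith [sqnorm_nonneg (x - xs)])
  have h₀ := enorm2_mvec0_sub_mvec0_le (y := y) hA hμ hr₀ hx hxs hys
  have h₁ : enorm2 (mvec1 A μ r₁ (x, y) - mvec1 A μ r₁ (xs, ys)) ≤
      (√n + 1) * (√(m * n) * a + μ * b) + √n * (√(m * n) + √2 * μ) * b := by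
    have hA' : ∀ j i, (-Aᵀ) j i ∈ Set.Icc (-1 : ℝ) 1 := fun j i => by
      obtain ⟨hlo, hhi⟩ := hA i j
      exact ⟨by simpa using hhi, by simpa using neg_le.2 hlo⟩
    simpa only [mvec1_eq_mvec0_neg_transpose, Prod.swap_prod_mk, mul_comm (n : ℝ)] using
      enorm2_mvec0_sub_mvec0_le hA' hμ hr₁ hy hys hxs
  have hsum : enorm2 (mvec0 A μ r₀ (x, y) - mvec0 A μ r₀ (xs, ys)) +
      enorm2 (mvec1 A μ r₁ (x, y) - mvec1 A μ r₁ (xs, ys)) ≤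
      (2 * P ^ 2 + 3 * μ * P + P + μ) * D :=
    calc _ ≤ ((√m + 1) * (√(m * n) * D + μ * D) + √m * (√(m * n) + √2 * μ) * D) +
          ((√n + 1) * (√(m * n) * D + μ * D) + √n * (√(m * n) + √2 * μ) * D) := by
          refine add_le_add (h₀.trans ?_) (h₁.trans ?_) <;> gcongr
      _ = ((√m + √n + 2) * (√(m * n) + μ) + (√m + √n) * (√(m * n) + √2 * μ)) * D := by ring
      _ ≤ _ := mul_le_mul_of_nonneg_right (mvec_lipschitz_const_le hm hn hμ hP) (Real.sqrt_nonneg _)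
  rw [← sq_enorm2, ← sq_enorm2, ← Real.sq_sqrt (add_nonneg (sqnorm_nonneg _) (sqnorm_nonneg _))]
  nlinarith [enorm2_nonneg (mvec0 A μ r₀ (x, y) - mvec0 A μ r₀ (xs, ys)),
    enorm2_nonneg (mvec1 A μ r₁ (x, y) - mvec1 A μ r₁ (xs, ys))]

end Lipschitz

lemma half_sq_sub_max_add_le {ξ : ℝ} (hξ : 0 ≤ ξ) (θ g h η : ℝ) :
    1 / 2 * (ξ - max (θ + η * g) 0) ^ 2 + η * (h * max (θ + η * g) 0) ≤
      1 / 2 * (ξ - θ) ^ 2 + η * (h * θ) - η * (g * ξ) + η * (g * θ) +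
        η ^ 2 / 2 * (g + h) ^ 2 := by
  rcases le_total 0 (θ + η * g) with hw | hw
  · rw [max_eq_left hw]
    nlinarith [sq_nonneg (η * h)]
  · rw [max_eq_right hw]
    nlinarith [mul_nonneg hξ (neg_nonneg.2 hw), sq_nonneg (η * h + θ + η * g)]

lemma regretMatchingPlus_step_le {d : ℕ} {ξ : Fin d → ℝ} (hξ : ∀ i, 0 ≤ ξ i)
    (θ g h : Fin d → ℝ) (η : ℝ) (hgθ : ip g θ = 0) :
    1 / 2 * sqnorm (ξ - fun i => max (θ i + η * g i) 0) +
        η * ip h (fun i => max (θ i + η * g i) 0) ≤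
      1 / 2 * sqnorm (ξ - θ) + η * ip h θ - η * ip g ξ + η ^ 2 / 2 * sqnorm (g + h) := by
  have hsum := sum_le_sum fun i (_ : i ∈ univ) =>
    half_sq_sub_max_add_le (hξ i) (θ i) (g i) (h i) η
  simp only [ip] at hgθ
  simp only [sum_add_distrib, sum_sub_distrib, ← mul_sum, hgθ, mul_zero, add_zero] at hsum
  simpa only [sqnorm, ip, Pi.sub_apply, Pi.add_apply] using hsum

lemma sInf_add_le_sInf_add_sub {f g : ℝ → ℝ} {a b c : ℝ} (hf : ∀ k, 0 ≤ f k)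
    (h : ∀ k, 1 ≤ k → f k + a ≤ g k + b - c) :
    sInf {v | ∃ k : ℝ, 1 ≤ k ∧ v = f k} + a ≤ sInf {v | ∃ k : ℝ, 1 ≤ k ∧ v = g k} + b - c := by
  have hbdd : BddBelow {v | ∃ k : ℝ, 1 ≤ k ∧ v = f k} := ⟨0, by rintro v ⟨k, -, rfl⟩; exact hf k⟩
  have hInf : sInf {v | ∃ k : ℝ, 1 ≤ k ∧ v = f k} + a - b + c ≤
      sInf {v | ∃ k : ℝ, 1 ≤ k ∧ v = g k} := by
    refine le_csInf ⟨g 1, 1, le_rfl, rfl⟩ ?_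
    rintro v ⟨k, hk, rfl⟩
    linarith [csInf_le hbdd ⟨k, hk, rfl⟩, h k hk]
  linarith

theorem rtrmplus_potential_decrease_general
    (m n : ℕ) (hm : 1 ≤ m) (hn : 1 ≤ n) (A : Matrix (Fin m) (Fin n) ℝ)
    (hA : ∀ i j, A i j ∈ Set.Icc (-1 : ℝ) 1)
    (μ : ℝ) (hμ : 0 < μ)
    (P C₀ : ℝ) (hP : P = ((m : ℝ) + (n : ℝ)))
    (hC₀ : C₀ = 2 * P ^ 2 + 3 * μ * P + P + μ)
    (r₀ : Fin m → ℝ) (r₁ : Fin n → ℝ)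
    (hr₀ : r₀ ∈ stdSimplex ℝ (Fin m)) (hr₁ : r₁ ∈ stdSimplex ℝ (Fin n))
    (xs : Fin m → ℝ) (ys : Fin n → ℝ) (hsaddle : IsSaddle A μ r₀ r₁ xs ys)
    (η : ℝ) (hη : 0 < η)
    (C₁ : ℝ) (hC₁ : C₁ = 2 * η * μ - (η * C₀) ^ 2)
    (θ : ℕ → (Fin m → ℝ) × (Fin n → ℝ))
    (hinit_nonneg : (∀ a, 0 ≤ (θ 0).1 a) ∧ (∀ b, 0 ≤ (θ 0).2 b))
    (hrec : ∀ t, θ (t + 1) =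
      (fun a => max ((θ t).1 a + η * mvec0 A μ r₀ (strat (θ t)) a) 0,
       fun b => max ((θ t).2 b + η * mvec1 A μ r₁ (strat (θ t)) b) 0))
    (hnz : ∀ t, (θ t).1 ≠ 0 ∧ (θ t).2 ≠ 0) :
    ∀ t, Phi A μ r₀ r₁ η xs ys (θ (t + 1)) ≤
      Phi A μ r₀ r₁ η xs ys (θ t) -
        C₁ * ((1 / 2) * (sqnorm (xs - (strat (θ t)).1) + sqnorm (ys - (strat (θ t)).2))) := by
  intro t
  have hθ_nonneg : ∀ s, (∀ a, 0 ≤ (θ s).1 a) ∧ (∀ b, 0 ≤ (θ s).2 b) := by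
    rintro (_ | s)
    · exact hinit_nonneg
    · rw [hrec s]; exact ⟨fun a => le_max_right _ _, fun b => le_max_right _ _⟩
  obtain ⟨hθ₀, hθ₁⟩ := hθ_nonneg t
  obtain ⟨hθ₀_ne, hθ₁_ne⟩ := hnz t
  set σ := strat (θ t)
  have hx : σ.1 ∈ stdSimplex ℝ (Fin m) := inv_sum_abs_smul_mem_stdSimplex hθ₀ hθ₀_ne
  have hy : σ.2 ∈ stdSimplex ℝ (Fin n) := inv_sum_abs_smul_mem_stdSimplex hθ₁ hθ₁_ne
  set D := sqnorm (xs - σ.1) + sqnorm (ys - σ.2)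
  have hmono : μ * D ≤ ip (mvec0 A μ r₀ σ) xs + ip (mvec1 A μ r₁ σ) ys := by
    simpa only [sqnorm_sub_comm σ.1, sqnorm_sub_comm σ.2] using
      hsaddle.mul_sqnorm_sub_le_ip_mvec hx hy
  have hlip : sqnorm (mvec0 A μ r₀ σ - mvec0 A μ r₀ (xs, ys)) +
      sqnorm (mvec1 A μ r₁ σ - mvec1 A μ r₁ (xs, ys)) ≤ C₀ ^ 2 * D := by
    simpa only [hC₀, sqnorm_sub_comm σ.1, sqnorm_sub_comm σ.2] using
      sqnorm_mvec_sub_mvec_le hm hn hA hμ.le hr₀ hr₁ hx hsaddle.1 hy hsaddle.2.1 hP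
  have hD : 0 ≤ D := add_nonneg (sqnorm_nonneg _) (sqnorm_nonneg _)
  refine sInf_add_le_sInf_add_sub (fun k => mul_nonneg (by norm_num)
    (add_nonneg (sqnorm_nonneg _) (sqnorm_nonneg _))) fun k hk => ?_
  have h₀ := regretMatchingPlus_step_le (ξ := k • xs)
    (fun i => mul_nonneg (by linarith) (hsaddle.1.1 i)) (θ t).1 (mvec0 A μ r₀ σ)
    (-mvec0 A μ r₀ (xs, ys)) η (ip_regretVec_inv_sum_abs_smul _ hθ₀ hθ₀_ne)
  have h₁ := regretMatchingPlus_step_le (ξ := k • ys)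
    (fun i => mul_nonneg (by linarith) (hsaddle.2.1.1 i)) (θ t).2 (mvec1 A μ r₁ σ)
    (-mvec1 A μ r₁ (xs, ys)) η (ip_regretVec_inv_sum_abs_smul _ hθ₁ hθ₁_ne)
  rw [ip_smul_right, ← sub_eq_add_neg] at h₀ h₁
  rw [hrec t, hC₁]
  dsimp only
  linarith [mul_le_mul_of_nonneg_left hmono hη.le, mul_le_mul_of_nonneg_left hlip (sq_nonneg η),
    mul_nonneg (mul_nonneg hη.le (sub_nonneg.2 hk)) ((mul_nonneg hμ.le hD).trans hmono)]

/-- along the reward-transformed RM+ dynamics with step size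
`0 < η < 2μ/C₀²`, the potential `Φ` decreases at each step by at least
`C₁·½‖σ* − σ^t‖₂²`, where `C₁ = 2ημ − (ηC₀)²` and `σ*` is the unique saddle point of `f_r`. -/
theorem rtrmplus_potential_decrease
    (m n : ℕ) (hm : 1 ≤ m) (hn : 1 ≤ n) (A : Matrix (Fin m) (Fin n) ℝ)
    (hA : ∀ i j, A i j ∈ Set.Icc (-1 : ℝ) 1)
    (μ : ℝ) (hμ : 0 < μ)
    (P C₀ : ℝ) (hP : P = ((m : ℝ) + (n : ℝ)))
    (hC₀ : C₀ = 2 * P ^ 2 + 3 * μ * P + P + μ)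
    (r₀ : Fin m → ℝ) (r₁ : Fin n → ℝ)
    (hr₀ : r₀ ∈ stdSimplex ℝ (Fin m)) (hr₁ : r₁ ∈ stdSimplex ℝ (Fin n))
    (xs : Fin m → ℝ) (ys : Fin n → ℝ) (hsaddle : IsSaddle A μ r₀ r₁ xs ys)
    (η : ℝ) (hη : 0 < η) (hηlt : η < 2 * μ / C₀ ^ 2)
    (C₁ : ℝ) (hC₁ : C₁ = 2 * η * μ - (η * C₀) ^ 2)
    (θ : ℕ → (Fin m → ℝ) × (Fin n → ℝ))
    (hinit_nonneg : (∀ a, 0 ≤ (θ 0).1 a) ∧ (∀ b, 0 ≤ (θ 0).2 b))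
    (hinit_ne : (θ 0).1 ≠ 0 ∧ (θ 0).2 ≠ 0)
    (hrec : ∀ t, θ (t + 1) =
      (fun a => max ((θ t).1 a + η * mvec0 A μ r₀ (strat (θ t)) a) 0,
       fun b => max ((θ t).2 b + η * mvec1 A μ r₁ (strat (θ t)) b) 0))
    (hnz : ∀ t, (θ t).1 ≠ 0 ∧ (θ t).2 ≠ 0) :
    ∀ t, Phi A μ r₀ r₁ η xs ys (θ (t + 1)) ≤
      Phi A μ r₀ r₁ η xs ys (θ t) -
        C₁ * ((1 / 2) * (sqnorm (xs - (strat (θ t)).1) + sqnorm (ys - (strat (θ t)).2))) :=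
  rtrmplus_potential_decrease_general m n hm hn A hA μ hμ P C₀ hP hC₀ r₀ r₁ hr₀ hr₁ xs ys hsaddle η
    hη C₁ hC₁ θ hinit_nonneg hrec hnz
end
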